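/- arXiv:math/0204285 — 3 statements merged into one kernel-verified Lean document; each statement's English description precedes it below -/
import Mathlib

section
/- The factorizations T, W₀ and W₁ in Map₂ are fully invariant: for every element γ ∈ Map₂, (T)_γ is Hurwitz equivalent to T, (W₀)_γ is Hurwitz equivalent to W₀, and (W₁)_γ is Hurwitz equivalent to W₁. -/
/-- A single Hurwitz move: replace two consecutive entries `(x, y)` by `(x y x⁻¹, x)`. -/
def HurwitzMove {G : Type*} [Group G] (F F' : List G) : Prop :=
  ∃ (l₁ l₂ : List G) (x y : G),
    F = l₁ ++ x :: y :: l₂ ∧ F' = l₁ ++ (x * y * x⁻¹) :: x :: l₂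

/-- Hurwitz equivalence: the reflexive-symmetric-transitive closure of Hurwitz moves.
(The symmetric closure accounts for the inverse move `(x, y) ↦ (y, y⁻¹ x y)`.) -/
def HurwitzEquiv {G : Type*} [Group G] : List G → List G → Prop :=
  Relation.EqvGen HurwitzMove

/-- `n`-fold concatenation of a factorization with itself. -/
def fpow {G : Type*} (F : List G) (n : ℕ) : List G :=
  (List.replicate n F).flatten

/-- Simultaneous conjugation of all entries of a factorization by `φ`: `τ ↦ φ⁻¹ τ φ`. -/
def fconj {G : Type*} [Group G] (F : List G) (φ : G) : List G :=
  F.map fun τ => φ⁻¹ * τ * φ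

/-- Generators of the free group on five letters. -/
abbrev fg (i : Fin 5) : FreeGroup (Fin 5) := FreeGroup.of i

/-- The word `ζ₁ζ₂ζ₃ζ₄ζ₅` in the free group. -/
def Δw : FreeGroup (Fin 5) := fg 0 * fg 1 * fg 2 * fg 3 * fg 4

/-- The word `ζ₁ζ₂ζ₃ζ₄ζ₅²ζ₄ζ₃ζ₂ζ₁` in the free group. -/
def Iw : FreeGroup (Fin 5) :=
  fg 0 * fg 1 * fg 2 * fg 3 * fg 4 * fg 4 * fg 3 * fg 2 * fg 1 * fg 0

/-- Relations for the presentation of the genus-2 mapping class group `Map₂`: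
commutations `ζᵢζⱼ = ζⱼζᵢ` for `|i - j| ≥ 2`, braid relations
`ζᵢζᵢ₊₁ζᵢ = ζᵢ₊₁ζᵢζᵢ₊₁`, `(ζ₁ζ₂ζ₃ζ₄ζ₅)⁶ = 1`, `I = ζ₁ζ₂ζ₃ζ₄ζ₅²ζ₄ζ₃ζ₂ζ₁` is central,
and `I² = 1`. -/
def map2Rels : Set (FreeGroup (Fin 5)) :=
  { r | (∃ i j : Fin 5, (i : ℕ) + 2 ≤ (j : ℕ) ∧ r = fg i * fg j * (fg i)⁻¹ * (fg j)⁻¹) ∨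
        (∃ i : Fin 4, r = fg i.castSucc * fg i.succ * fg i.castSucc *
          (fg i.succ * fg i.castSucc * fg i.succ)⁻¹) ∨
        r = Δw ^ 6 ∨
        (∃ i : Fin 5, r = Iw * fg i * Iw⁻¹ * (fg i)⁻¹) ∨
        r = Iw ^ 2 }

/-- The mapping class group of a closed genus-2 surface, via its standard presentation. -/
abbrev Map₂ : Type := PresentedGroup map2Rels

/-- The Dehn twist generators `ζ₁, …, ζ₅` (indexed by `Fin 5`, so `ζ 0 = ζ₁`, …). -/
def ζ (i : Fin 5) : Map₂ := PresentedGroup.of i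

/-- The hyperelliptic involution `I = ζ₁ζ₂ζ₃ζ₄ζ₅²ζ₄ζ₃ζ₂ζ₁` as an element of `Map₂`. -/
def Ihe : Map₂ := ζ 0 * ζ 1 * ζ 2 * ζ 3 * ζ 4 * ζ 4 * ζ 3 * ζ 2 * ζ 1 * ζ 0

/-- The separating Dehn twist `σ = (ζ₁ζ₂)⁶`. -/
def σ : Map₂ := (ζ 0 * ζ 1) ^ 6

/-- The factorization `T = ζ₁·ζ₂·ζ₃·ζ₄·ζ₅·ζ₅·ζ₄·ζ₃·ζ₂·ζ₁`. -/
def T : List Map₂ := [ζ 0, ζ 1, ζ 2, ζ 3, ζ 4, ζ 4, ζ 3, ζ 2, ζ 1, ζ 0]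

/-- The factorization `W₀ = (T)²`. -/
def W₀ : List Map₂ := T ++ T

/-- The factorization `W₁ = (ζ₁·ζ₂·ζ₃·ζ₄·ζ₅)⁶`. -/
def W₁ : List Map₂ := fpow [ζ 0, ζ 1, ζ 2, ζ 3, ζ 4] 6

/-- The factorization `Φ_f = ζ₃·ζ₄·ζ₅·ζ₂·ζ₃·ζ₄·ζ₁·ζ₂·ζ₃`. -/
def Φf : List Map₂ := [ζ 2, ζ 3, ζ 4, ζ 1, ζ 2, ζ 3, ζ 0, ζ 1, ζ 2]

/-- The factorization `W₂ = σ·(ζ₃·ζ₄·ζ₅·ζ₂·ζ₃·ζ₄·ζ₁·ζ₂·ζ₃)²·T`. -/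
def W₂ : List Map₂ := σ :: (Φf ++ Φf ++ T)

/-!
Conjugating a factorization by its own product is a Hurwitz equivalence (the full twist). Hence,
if `F = A ++ B` has central product, conjugation by `A.prod` is Hurwitz trivial on both `A` and
`B`, so every prefix product of `F`, and therefore every entry of `F`, lies in the Hurwitz
stabilizer of `F`. The products of `T`, `W₀`, `W₁` are `I`, `I²`, `(ζ₁ζ₂ζ₃ζ₄ζ₅)⁶ = 1`, all central,
and each of them contains every generator `ζᵢ`, so its stabilizer is all of `Map₂`.
-/

local infix:50 " ∼ " => HurwitzEquiv

namespace HurwitzEquiv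

variable {G : Type*} [Group G] {F F' : List G}

theorem refl (F : List G) : F ∼ F := Relation.EqvGen.refl F

theorem symm (h : F ∼ F') : F' ∼ F := Relation.EqvGen.symm _ _ h

theorem trans {F'' : List G} (h : F ∼ F') (h' : F' ∼ F'') : F ∼ F'' :=
  Relation.EqvGen.trans _ _ _ h h'

instance : Trans (@HurwitzEquiv G _) (@HurwitzEquiv G _) (@HurwitzEquiv G _) := ⟨trans⟩

theorem swap {x y z : G} (L : List G) (h : x * y * x⁻¹ = z) :
    x :: y :: L ∼ z :: x :: L :=
  Relation.EqvGen.rel _ _ ⟨[], L, x, y, rfl, by rw [h]; rfl⟩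

theorem map {f : List G → List G} (hf : ∀ F F', HurwitzMove F F' → HurwitzMove (f F) (f F'))
    (h : F ∼ F') : f F ∼ f F' := by
  induction h with
  | rel F F' h => exact Relation.EqvGen.rel _ _ (hf F F' h)
  | refl F => exact refl _
  | symm _ _ _ ih => exact ih.symm
  | trans _ _ _ _ _ ih ih' => exact ih.trans ih'

theorem append_left (L : List G) (h : F ∼ F') : L ++ F ∼ L ++ F' :=
  h.map fun _ _ ⟨l₁, l₂, x, y, hF, hF'⟩ => ⟨L ++ l₁, l₂, x, y, by simp [hF], by simp [hF']⟩

theorem append_right (L : List G) (h : F ∼ F') : F ++ L ∼ F' ++ L :=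
  h.map (f := (· ++ L)) fun _ _ ⟨l₁, l₂, x, y, hF, hF'⟩ =>
    ⟨l₁, l₂ ++ L, x, y, by simp [hF], by simp [hF']⟩

theorem append {E E' : List G} (h : F ∼ F') (h' : E ∼ E') : F ++ E ∼ F' ++ E' :=
  (h.append_right E).trans (h'.append_left F')

theorem cons (x : G) (h : F ∼ F') : x :: F ∼ x :: F' :=
  h.append_left [x]

theorem conj (φ : G) (h : F ∼ F') : fconj F φ ∼ fconj F' φ :=
  h.map fun _ _ ⟨l₁, l₂, x, y, hF, hF'⟩ =>
    ⟨fconj l₁ φ, fconj l₂ φ, φ⁻¹ * x * φ, φ⁻¹ * y * φ, by simp [hF, fconj],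
      by simp [hF', fconj]; group⟩

end HurwitzEquiv

section Factorization

variable {G : Type*} [Group G]

@[simp]
theorem fconj_cons (x : G) (L : List G) (φ : G) :
    fconj (x :: L) φ = (φ⁻¹ * x * φ) :: fconj L φ := rfl

@[simp]
theorem fconj_append (F E : List G) (φ : G) : fconj (F ++ E) φ = fconj F φ ++ fconj E φ :=
  List.map_append

@[simp]
theorem fconj_one (F : List G) : fconj F 1 = F := by simp [fconj]

theorem fconj_mul (F : List G) (φ ψ : G) : fconj F (φ * ψ) = fconj (fconj F φ) ψ := by
  simp only [fconj, List.map_map]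
  exact List.map_congr_left fun τ _ => by simp only [Function.comp_apply]; group

theorem fconj_of_mem_center (F : List G) {c : G} (hc : c ∈ Subgroup.center G) :
    fconj F c = F := by
  refine List.map_id'' (fun τ => ?_) F
  rw [mul_assoc, Subgroup.mem_center_iff.mp hc τ, inv_mul_cancel_left]

theorem prod_fpow (F : List G) (n : ℕ) : (fpow F n).prod = F.prod ^ n := by
  simp [fpow, List.prod_flatten]

end Factorization

namespace HurwitzEquiv

variable {G : Type*} [Group G]

theorem slide_left (L : List G) (y : G) : L ++ [y] ∼ y :: fconj L y := by
  induction L with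
  | nil => exact refl _
  | cons a L ih =>
    calc a :: (L ++ [y]) ∼ a :: y :: fconj L y := ih.cons a
      _ ∼ y :: (y⁻¹ * a * y) :: fconj L y := (swap _ (by group)).symm

theorem slide_right (x : G) (L : List G) :
    x :: L ∼ L ++ [L.prod⁻¹ * x * L.prod] := by
  induction L generalizing x with
  | nil => simpa using refl [x]
  | cons a L ih =>
    calc x :: a :: L ∼ a :: (a⁻¹ * x * a) :: L := (swap _ (by group)).symm
      _ ∼ a :: (L ++ [L.prod⁻¹ * (a⁻¹ * x * a) * L.prod]) := (ih _).cons a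
      _ = (a :: L) ++ [(a :: L).prod⁻¹ * x * (a :: L).prod] := by simp [mul_assoc]

theorem fconj_prod (F : List G) : fconj F F.prod ∼ F := by
  induction F with
  | nil => exact refl _
  | cons x L ih =>
    set w := L.prod⁻¹ * x * L.prod
    have hw : L.prod * w = (x :: L).prod := by simp [w, mul_assoc]
    calc fconj (x :: L) (x :: L).prod = w :: fconj (fconj L L.prod) w := by
          rw [← fconj_mul, hw, fconj_cons]; congr 1; simp only [w, List.prod_cons]; group
      _ ∼ fconj L L.prod ++ [w] := (slide_left _ _).symm
      _ ∼ L ++ [w] := ih.append_right _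
      _ ∼ x :: L := (slide_right x L).symm

end HurwitzEquiv

section Stabilizer

variable {G : Type*} [Group G]

def hurwitzStabilizer (F : List G) : Subgroup G where
  carrier := {γ | fconj F γ ∼ F}
  one_mem' := by simpa using HurwitzEquiv.refl F
  mul_mem' {φ ψ} (hφ : fconj F φ ∼ F) (hψ : fconj F ψ ∼ F) := by
    simpa only [Set.mem_ofPred_eq, fconj_mul] using (hφ.conj ψ).trans hψ
  inv_mem' {φ} (hφ : fconj F φ ∼ F) := by
    simpa [← fconj_mul] using (hφ.conj φ⁻¹).symm

theorem mem_hurwitzStabilizer {F : List G} {γ : G} :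
    γ ∈ hurwitzStabilizer F ↔ fconj F γ ∼ F :=
  Iff.rfl

theorem prod_mem_hurwitzStabilizer (F : List G) : F.prod ∈ hurwitzStabilizer F :=
  HurwitzEquiv.fconj_prod F

/-- On `B`, conjugation by `A.prod = (A ++ B).prod * B.prod⁻¹` is conjugation by `B.prod⁻¹`. -/
theorem prod_mem_hurwitzStabilizer_append (A B : List G)
    (hc : (A ++ B).prod ∈ Subgroup.center G) : A.prod ∈ hurwitzStabilizer (A ++ B) := by
  have hA : A.prod = (A ++ B).prod * B.prod⁻¹ := by simp
  have hB : fconj B A.prod = fconj B B.prod⁻¹ := by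
    rw [hA, fconj_mul, fconj_of_mem_center B hc]
  rw [mem_hurwitzStabilizer, fconj_append, hB]
  exact (prod_mem_hurwitzStabilizer A).append (inv_mem (prod_mem_hurwitzStabilizer B))

theorem mem_hurwitzStabilizer_of_mem {F : List G} (hc : F.prod ∈ Subgroup.center G) {x : G}
    (hx : x ∈ F) : x ∈ hurwitzStabilizer F := by
  obtain ⟨A, B, rfl⟩ := List.append_of_mem hx
  have hA := prod_mem_hurwitzStabilizer_append A (x :: B) hc
  have hAx := prod_mem_hurwitzStabilizer_append (A ++ [x]) B (by simpa using hc)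
  rw [List.append_assoc, List.singleton_append] at hAx
  simpa using mul_mem (inv_mem hA) hAx

theorem fconj_hurwitzEquiv_of_closure_eq_top {F : List G} (hc : F.prod ∈ Subgroup.center G)
    (hF : Subgroup.closure {x | x ∈ F} = ⊤) (γ : G) : fconj F γ ∼ F := by
  have hle : Subgroup.closure {x | x ∈ F} ≤ hurwitzStabilizer F :=
    (Subgroup.closure_le _).mpr fun _ => mem_hurwitzStabilizer_of_mem hc
  exact hle (hF ▸ Subgroup.mem_top γ)

end Stabilizer

theorem mk_fg (i : Fin 5) : PresentedGroup.mk map2Rels (fg i) = ζ i := rfl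

theorem ζ_pow_six : (ζ 0 * ζ 1 * ζ 2 * ζ 3 * ζ 4) ^ 6 = 1 := by
  simpa only [Δw, map_pow, map_mul, mk_fg] using
    PresentedGroup.one_of_mem (rels := map2Rels) (Or.inr (Or.inr (Or.inl rfl)))

theorem Ihe_mul_ζ (i : Fin 5) : Ihe * ζ i = ζ i * Ihe := by
  have h : Ihe * ζ i * Ihe⁻¹ * (ζ i)⁻¹ = 1 := by
    simpa only [Ihe, Iw, map_mul, map_inv, mk_fg] using
      PresentedGroup.one_of_mem (rels := map2Rels) (Or.inr (Or.inr (Or.inr (Or.inl ⟨i, rfl⟩))))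
  rwa [mul_inv_eq_one, mul_inv_eq_iff_eq_mul] at h

theorem Ihe_mem_center : Ihe ∈ Subgroup.center Map₂ := by
  rw [Subgroup.center_eq_iInf (PresentedGroup.closure_range_of map2Rels)]
  simp only [Subgroup.mem_iInf, Set.forall_mem_range, Subgroup.mem_centralizer_singleton_iff]
  exact Ihe_mul_ζ

theorem fconj_hurwitzEquiv_of_forall_ζ_mem {F : List Map₂} (hc : F.prod ∈ Subgroup.center Map₂)
    (hζ : ∀ i, ζ i ∈ F) (γ : Map₂) : fconj F γ ∼ F :=
  fconj_hurwitzEquiv_of_closure_eq_top hc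
    (eq_top_mono (Subgroup.closure_mono (Set.range_subset_iff.mpr hζ))
      (PresentedGroup.closure_range_of map2Rels)) γ

theorem prod_T : T.prod = Ihe := by
  simp [T, Ihe, mul_assoc]

theorem ζ_mem_T (i : Fin 5) : ζ i ∈ T := by
  fin_cases i <;> simp [T]

theorem prod_W₁ : W₁.prod = 1 := by
  rw [W₁, prod_fpow]
  simpa only [List.prod_cons, List.prod_nil, mul_one, mul_assoc] using ζ_pow_six

theorem ζ_mem_W₁ (i : Fin 5) : ζ i ∈ W₁ := by
  fin_cases i <;> simp [W₁, fpow]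

/-- **Lemma 7.** The factorizations `T`, `W₀` and `W₁` are fully invariant: simultaneous
conjugation by any `γ ∈ Map₂` yields a Hurwitz equivalent factorization. -/
theorem fully_invariant (γ : Map₂) :
    HurwitzEquiv (fconj T γ) T ∧ HurwitzEquiv (fconj W₀ γ) W₀ ∧
      HurwitzEquiv (fconj W₁ γ) W₁ := by
  have hW₀ : W₀.prod ∈ Subgroup.center Map₂ := by
    simpa [W₀, prod_T] using mul_mem Ihe_mem_center Ihe_mem_center
  exact ⟨fconj_hurwitzEquiv_of_forall_ζ_mem (prod_T ▸ Ihe_mem_center) ζ_mem_T γ,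
    fconj_hurwitzEquiv_of_forall_ζ_mem hW₀ (fun i => List.mem_append_left T (ζ_mem_T i)) γ,
    fconj_hurwitzEquiv_of_forall_ζ_mem (prod_W₁ ▸ one_mem _) ζ_mem_W₁ γ⟩
end

section
/- Every element of Map₂ can be written as a product of a finite sequence of the generators ζ₁, ζ₂, ζ₃, ζ₄, ζ₅, using only the generators themselves and not their inverses (i.e. every element of Map₂ is a positive word in ζ₁,…,ζ₅). -/
/-!
The word `ζ₁ζ₂ζ₃ζ₄ζ₅` has order dividing 6, so its inverse is a positive word. Writing
`ζ₁ζ₂ζ₃ζ₄ζ₅ = a ζᵢ b` with `a`, `b` positive gives `ζᵢ⁻¹ = b (ζ₁ζ₂ζ₃ζ₄ζ₅)⁻¹ a`, again positive.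
A group generated by elements whose inverses are positive words is generated by them as a monoid.
-/

namespace Submonoid

variable {G : Type*} [Group G]

theorem inv_mem_of_forall_mem_of_inv_prod_mem {M : Submonoid G} :
    ∀ {l : List G}, (∀ x ∈ l, x ∈ M) → l.prod⁻¹ ∈ M → ∀ x ∈ l, x⁻¹ ∈ M
  | [], _, _, _, hx => absurd hx List.not_mem_nil
  | y :: l, hl, hprod, x, hx => by
    rw [List.prod_cons] at hprod
    have hy : y ∈ M := hl y List.mem_cons_self
    have hl' : ∀ z ∈ l, z ∈ M := fun z hz => hl z (List.mem_cons_of_mem y hz)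
    rcases List.mem_cons.mp hx with rfl | hx
    · have : x⁻¹ = l.prod * (x * l.prod)⁻¹ := by group
      exact this ▸ mul_mem (M.list_prod_mem hl') hprod
    · have : l.prod⁻¹ = (y * l.prod)⁻¹ * y := by group
      exact inv_mem_of_forall_mem_of_inv_prod_mem hl' (this ▸ mul_mem hprod hy) x hx

theorem inv_mem_of_isOfFinOrder {M : Submonoid G} {x : G} (hx : x ∈ M) (hfin : IsOfFinOrder x) :
    x⁻¹ ∈ M :=
  powers_le.mpr hx <|
    hfin.mem_powers_iff_mem_zpowers.mpr (Subgroup.inv_mem _ (Subgroup.mem_zpowers x))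

theorem closure_eq_top_of_isOfFinOrder_prod {s : Set G} (hs : Subgroup.closure s = ⊤)
    {l : List G} (hls : ∀ x ∈ l, x ∈ s) (hsl : ∀ x ∈ s, x ∈ l) (hfin : IsOfFinOrder l.prod) :
    closure s = ⊤ := by
  have hl : ∀ x ∈ l, x ∈ closure s := fun x hx => subset_closure (hls x hx)
  have hinv := inv_mem_of_forall_mem_of_inv_prod_mem hl
    (inv_mem_of_isOfFinOrder ((closure s).list_prod_mem hl) hfin)
  rw [eq_top_iff, ← Subgroup.top_toSubmonoid, ← hs, Subgroup.closure_toSubmonoid, closure_le]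
  exact Set.union_subset subset_closure fun x hx => inv_inv x ▸ hinv x⁻¹ (hsl _ hx)

end Submonoid

theorem zeta_prod_pow_six : ((List.finRange 5).map ζ).prod ^ 6 = 1 := by
  have h := PresentedGroup.one_of_mem (rels := map2Rels) (Or.inr (Or.inr (Or.inl rfl)))
  simpa [Δw, ζ, PresentedGroup.of, List.finRange_succ, mul_assoc] using h

theorem closure_range_zeta : Submonoid.closure (Set.range ζ) = ⊤ :=
  Submonoid.closure_eq_top_of_isOfFinOrder_prod (PresentedGroup.closure_range_of map2Rels)
    (l := (List.finRange 5).map ζ) (by simp) (by simp)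
    (isOfFinOrder_iff_pow_eq_one.mpr ⟨6, by norm_num, zeta_prod_pow_six⟩)

/-- Every element of `Map₂` is a positive word in the generators `ζ₁, …, ζ₅`. -/
theorem positive_words (g : Map₂) :
    ∃ l : List (Fin 5), g = (l.map ζ).prod := by
  obtain ⟨w, hw⟩ : g ∈ MonoidHom.mrange (FreeMonoid.lift ζ) := by
    rw [FreeMonoid.mrange_lift, closure_range_zeta]
    exact Submonoid.mem_top g
  exact ⟨w.toList, by rw [← hw, FreeMonoid.lift_apply]⟩
end

section
/- In Map₂, the factorization (W₁)² is Hurwitz equivalent to the factorization (ζ₁·ζ₂·ζ₃·ζ₄·ζ₅)⁶·(ζ₅·ζ₄·ζ₃·ζ₂·ζ₁)⁶. -/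
/-! ### Auxiliary machinery for proving Hurwitz equivalences -/

private lemma rel_eq_one {r : FreeGroup (Fin 5)} (h : r ∈ map2Rels) :
    PresentedGroup.mk map2Rels r = 1 :=
  (QuotientGroup.eq_one_iff r).mpr (Subgroup.subset_normalClosure h)

private lemma zeta_comm {i j : Fin 5} (h : (i : ℕ) + 2 ≤ (j : ℕ)) :
    ζ i * ζ j = ζ j * ζ i := by
  have h1 : PresentedGroup.mk map2Rels (fg i * fg j * (fg i)⁻¹ * (fg j)⁻¹) = 1 :=
    rel_eq_one (Or.inl ⟨i, j, h, rfl⟩)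
  rw [map_mul, map_mul, map_mul, map_inv, map_inv] at h1
  have h2 : ζ i * ζ j * (ζ i)⁻¹ * (ζ j)⁻¹ = 1 := h1
  calc ζ i * ζ j = (ζ i * ζ j * (ζ i)⁻¹ * (ζ j)⁻¹) * (ζ j * ζ i) := by group
    _ = ζ j * ζ i := by rw [h2, one_mul]

private lemma zeta_braid {i j : Fin 5} (h : (i : ℕ) + 1 = (j : ℕ)) :
    ζ i * ζ j * ζ i = ζ j * ζ i * ζ j := by
  have hi4 : (i : ℕ) < 4 := by omega
  have hci : (⟨(i : ℕ), hi4⟩ : Fin 4).castSucc = i := by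
    apply Fin.ext; simp
  have hsj : (⟨(i : ℕ), hi4⟩ : Fin 4).succ = j := by
    apply Fin.ext; simp [Fin.val_succ]; omega
  have h1 : PresentedGroup.mk map2Rels
      (fg i * fg j * fg i * (fg j * fg i * fg j)⁻¹) = 1 :=
    rel_eq_one (Or.inr (Or.inl ⟨⟨(i : ℕ), hi4⟩, by rw [hci, hsj]⟩))
  rw [map_mul, map_mul, map_inv, map_mul, map_mul] at h1
  have h2 : ζ i * ζ j * ζ i * (ζ j * ζ i * ζ j)⁻¹ = 1 := h1
  exact mul_inv_eq_one.mp h2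

private lemma he_move {G : Type*} [Group G] (x y : G) (l : List G) :
    HurwitzEquiv (x :: y :: l) ((x * y * x⁻¹) :: x :: l) :=
  Relation.EqvGen.rel _ _ ⟨[], l, x, y, rfl, rfl⟩

private lemma he_cons {G : Type*} [Group G] (a : G) {F F' : List G}
    (h : HurwitzEquiv F F') : HurwitzEquiv (a :: F) (a :: F') := by
  induction h with
  | rel x y hxy =>
      obtain ⟨l₁, l₂, u, v, h1, h2⟩ := hxy
      exact Relation.EqvGen.rel _ _ ⟨a :: l₁, l₂, u, v, by simp [h1], by simp [h2]⟩
  | refl x => exact Relation.EqvGen.refl _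
  | symm x y _ ih => exact Relation.EqvGen.symm _ _ ih
  | trans x y z _ _ ih1 ih2 => exact Relation.EqvGen.trans _ _ _ ih1 ih2

private lemma he_swap {G : Type*} [Group G] {x y : G} (h : x * y = y * x) (l : List G) :
    HurwitzEquiv (x :: y :: l) (y :: x :: l) := by
  have hm := he_move x y l
  rwa [show x * y * x⁻¹ = y by rw [h, mul_inv_cancel_right]] at hm

private lemma he_braid {G : Type*} [Group G] {x y : G} (h : x * y * x = y * x * y)
    (l : List G) : HurwitzEquiv (x :: y :: x :: l) (y :: x :: y :: l) := by
  have s1 : HurwitzEquiv (x :: y :: x :: l) (x :: (y * x * y⁻¹) :: y :: l) :=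
    he_cons x (he_move y x l)
  have s2 := he_move x (y * x * y⁻¹) (y :: l)
  have key : x * (y * x * y⁻¹) * x⁻¹ = y := by
    have e : x * (y * x * y⁻¹) * x⁻¹ = (x * y * x) * (y⁻¹ * x⁻¹) := by group
    rw [e, h]; group
  rw [key] at s2
  exact Relation.EqvGen.trans _ _ _ s1 s2

/-- Apply one elementary rewriting step (commutation swap or braid move) at position `n`. -/
private def applyStep : List (Fin 5) → ℕ → Option (List (Fin 5))
  | a :: rest, n+1 => (applyStep rest n).map (a :: ·)
  | a :: b :: c :: rest, 0 =>
      if (a : ℕ) + 2 ≤ (b : ℕ) ∨ (b : ℕ) + 2 ≤ (a : ℕ) then some (b :: a :: c :: rest)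
      else if a = c ∧ ((a : ℕ) + 1 = (b : ℕ) ∨ (b : ℕ) + 1 = (a : ℕ)) then
        some (b :: a :: b :: rest)
      else none
  | [a, b], 0 =>
      if (a : ℕ) + 2 ≤ (b : ℕ) ∨ (b : ℕ) + 2 ≤ (a : ℕ) then some [b, a] else none
  | _, _ => none

private lemma comm_of_cond {a b : Fin 5} (hc : (a : ℕ) + 2 ≤ (b : ℕ) ∨ (b : ℕ) + 2 ≤ (a : ℕ)) :
    ζ a * ζ b = ζ b * ζ a := by
  rcases hc with hc | hc
  · exact zeta_comm hc
  · exact (zeta_comm hc).symm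

private lemma braid_of_cond {a b : Fin 5} (hc : (a : ℕ) + 1 = (b : ℕ) ∨ (b : ℕ) + 1 = (a : ℕ)) :
    ζ a * ζ b * ζ a = ζ b * ζ a * ζ b := by
  rcases hc with hc | hc
  · exact zeta_braid hc
  · exact (zeta_braid hc).symm

private lemma he_of_applyStep (w : List (Fin 5)) (n : ℕ) (w' : List (Fin 5))
    (h : applyStep w n = some w') : HurwitzEquiv (w.map ζ) (w'.map ζ) := by
  induction w generalizing n w' with
  | nil => simp [applyStep] at h
  | cons a rest ih =>
    cases n with
    | succ n =>
        simp only [applyStep, Option.map_eq_some_iff] at h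
        obtain ⟨v, hv, hw⟩ := h
        subst hw
        simpa using he_cons (ζ a) (ih n v hv)
    | zero =>
        rcases rest with _ | ⟨b, _ | ⟨c, rest'⟩⟩
        · simp [applyStep] at h
        · simp only [applyStep] at h
          split_ifs at h with hc
          · obtain rfl : [b, a] = w' := by injection h
            simpa using he_swap (comm_of_cond hc) (List.map ζ ([] : List (Fin 5)))
        · simp only [applyStep] at h
          split_ifs at h with hc hd
          · obtain rfl : b :: a :: c :: rest' = w' := by injection h
            simpa using he_swap (comm_of_cond hc) (List.map ζ (c :: rest'))
          · obtain ⟨rfl, hadj⟩ := hd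
            obtain rfl : b :: a :: b :: rest' = w' := by injection h
            simpa using he_braid (braid_of_cond hadj) (List.map ζ rest')

/-- Run a list of elementary rewriting steps. -/
private def runScript (w : List (Fin 5)) : List ℕ → Option (List (Fin 5))
  | [] => some w
  | n :: s =>
      match applyStep w n with
      | some w' => runScript w' s
      | none => none

private lemma he_of_runScript (w : List (Fin 5)) (s : List ℕ) (w' : List (Fin 5))
    (h : runScript w s = some w') : HurwitzEquiv (w.map ζ) (w'.map ζ) := by
  induction s generalizing w with
  | nil =>
      obtain rfl : w = w' := by
        have : some w = some w' := h
        injection this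
      exact Relation.EqvGen.refl _
  | cons n s ih =>
      rw [show runScript w (n :: s) =
          (match applyStep w n with
           | some w' => runScript w' s
           | none => none) from rfl] at h
      cases hw : applyStep w n with
      | none => rw [hw] at h; simp at h
      | some v =>
          rw [hw] at h
          exact Relation.EqvGen.trans _ _ _ (he_of_applyStep w n v hw) (ih v h)


private def startW : List (Fin 5) := [0, 1, 2, 3, 4, 0, 1, 2, 3, 4, 0, 1, 2, 3, 4, 0, 1, 2, 3, 4, 0, 1, 2, 3, 4, 0, 1, 2, 3, 4, 0, 1, 2, 3, 4, 0, 1, 2, 3, 4, 0, 1, 2, 3, 4, 0, 1, 2, 3, 4, 0, 1, 2, 3, 4, 0, 1, 2, 3, 4]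

private def endW : List (Fin 5) := [0, 1, 2, 3, 4, 0, 1, 2, 3, 4, 0, 1, 2, 3, 4, 0, 1, 2, 3, 4, 0, 1, 2, 3, 4, 0, 1, 2, 3, 4, 4, 3, 2, 1, 0, 4, 3, 2, 1, 0, 4, 3, 2, 1, 0, 4, 3, 2, 1, 0, 4, 3, 2, 1, 0, 4, 3, 2, 1, 0]

private def theScript : List Nat := [49, 48, 47, 45, 44, 43, 41, 40, 39, 37, 36, 35, 33, 32, 31, 30, 45, 44, 43, 41, 40, 39, 37, 36, 35, 33, 32, 31, 41, 40, 39, 37, 36, 35, 33, 32, 37, 36, 35, 33, 46, 45, 43, 42, 40, 39, 37, 36, 35, 43, 42, 40, 39, 37, 36, 40, 39, 37, 54, 53, 52, 55, 54, 56, 57, 55, 53, 51, 50, 49, 48, 47, 46, 45, 44, 43, 42, 41, 40, 39, 45, 43, 41, 40, 43, 41, 51, 50, 53, 52, 55, 54, 57, 56, 55, 53, 51, 49, 48, 47, 46, 45, 44, 43, 55, 54, 53, 52, 56, 55, 57, 56, 54, 53, 51, 50, 49, 48, 47, 46, 45, 44, 45, 50, 53, 52, 56, 55, 54, 53, 51,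 49, 48, 47, 53, 52, 55, 57, 56, 54, 53, 51, 50, 49, 48, 56, 55, 54, 57, 56, 55, 53, 52, 51, 50, 49, 55, 54, 53, 51, 56, 55, 53, 52, 57, 55, 54, 53, 57, 56, 55, 54]

/-- `(W₁)² ∼ (ζ₁·ζ₂·ζ₃·ζ₄·ζ₅)⁶·(ζ₅·ζ₄·ζ₃·ζ₂·ζ₁)⁶`. -/
theorem W1_sq_equiv :
    HurwitzEquiv (fpow W₁ 2)
      (fpow [ζ 0, ζ 1, ζ 2, ζ 3, ζ 4] 6 ++ fpow [ζ 4, ζ 3, ζ 2, ζ 1, ζ 0] 6) := by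
  have hrun : runScript startW theScript = some endW := by decide
  have h2 := he_of_runScript startW theScript endW hrun
  have e1 : fpow W₁ 2 = startW.map ζ := by rfl
  have e2 : (fpow [ζ 0, ζ 1, ζ 2, ζ 3, ζ 4] 6 ++ fpow [ζ 4, ζ 3, ζ 2, ζ 1, ζ 0] 6)
      = endW.map ζ := by rfl
  rw [e1, e2]
  exact h2
end
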